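/- arXiv:math/0107077 — 6 statements merged into one kernel-verified Lean document; each statement's English description precedes it below -/
import Mathlib

section
/- Let A be a unital associative algebra over ℂ. If for every A-bimodule M every derivation δ : A → M is inner, then there exists a diagonal in the algebraic tensor product A ⊗ A. -/
open scoped TensorProduct

namespace DiagAux

variable {A : Type} [Ring A] [Algebra ℂ A]

/-- multiplication map -/
noncomputable def pi (A : Type) [Ring A] [Algebra ℂ A] : A ⊗[ℂ] A →ₗ[ℂ] A :=
  LinearMap.mul' ℂ A

/-- left action of `A` on `A ⊗ A` (first factor) -/
noncomputable def Lm (c : A) : A ⊗[ℂ] A →ₗ[ℂ] A ⊗[ℂ] A :=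
  LinearMap.rTensor A (LinearMap.mulLeft ℂ c)

/-- right action of `A` on `A ⊗ A` (second factor) -/
noncomputable def Rm (c : A) : A ⊗[ℂ] A →ₗ[ℂ] A ⊗[ℂ] A :=
  LinearMap.lTensor A (LinearMap.mulRight ℂ c)

@[simp] lemma Lm_tmul (c x y : A) : Lm c (x ⊗ₜ[ℂ] y) = (c * x) ⊗ₜ[ℂ] y := rfl

@[simp] lemma Rm_tmul (c x y : A) : Rm c (x ⊗ₜ[ℂ] y) = x ⊗ₜ[ℂ] (y * c) := rfl

@[simp] lemma pi_tmul (x y : A) : pi A (x ⊗ₜ[ℂ] y) = x * y := rfl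

lemma pi_Lm (c : A) (t : A ⊗[ℂ] A) : pi A (Lm c t) = c * pi A t := by
  induction t using TensorProduct.induction_on with
  | zero => simp
  | tmul x y => simp [mul_assoc]
  | add x y hx hy => simp [hx, hy, mul_add]

lemma pi_Rm (c : A) (t : A ⊗[ℂ] A) : pi A (Rm c t) = pi A t * c := by
  induction t using TensorProduct.induction_on with
  | zero => simp
  | tmul x y => simp [mul_assoc]
  | add x y hx hy => simp [hx, hy, add_mul]

lemma Lm_one (t : A ⊗[ℂ] A) : Lm 1 t = t := by
  induction t using TensorProduct.induction_on with
  | zero => simp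
  | tmul x y => simp
  | add x y hx hy => simp [hx, hy]

lemma Rm_one (t : A ⊗[ℂ] A) : Rm 1 t = t := by
  induction t using TensorProduct.induction_on with
  | zero => simp
  | tmul x y => simp
  | add x y hx hy => simp [hx, hy]

lemma Lm_mul (c d : A) (t : A ⊗[ℂ] A) : Lm (c * d) t = Lm c (Lm d t) := by
  induction t using TensorProduct.induction_on with
  | zero => simp
  | tmul x y => simp [mul_assoc]
  | add x y hx hy => simp [hx, hy]

lemma Rm_mul (c d : A) (t : A ⊗[ℂ] A) : Rm (c * d) t = Rm d (Rm c t) := by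
  induction t using TensorProduct.induction_on with
  | zero => simp
  | tmul x y => simp [mul_assoc]
  | add x y hx hy => simp [hx, hy]

lemma Lm_add (c d : A) (t : A ⊗[ℂ] A) : Lm (c + d) t = Lm c t + Lm d t := by
  induction t using TensorProduct.induction_on with
  | zero => simp
  | tmul x y => simp [add_mul, TensorProduct.add_tmul]
  | add x y hx hy => simp [hx, hy]; abel

lemma Rm_add (c d : A) (t : A ⊗[ℂ] A) : Rm (c + d) t = Rm c t + Rm d t := by
  induction t using TensorProduct.induction_on with
  | zero => simp
  | tmul x y => simp [mul_add, TensorProduct.tmul_add]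
  | add x y hx hy => simp [hx, hy]; abel


lemma Lm_zero (t : A ⊗[ℂ] A) : Lm (0 : A) t = 0 := by
  induction t using TensorProduct.induction_on with
  | zero => simp
  | tmul x y => simp [Lm_tmul, TensorProduct.zero_tmul]
  | add x y hx hy => simp [hx, hy]

lemma Rm_zero (t : A ⊗[ℂ] A) : Rm (0 : A) t = 0 := by
  induction t using TensorProduct.induction_on with
  | zero => simp
  | tmul x y => simp [Rm_tmul, TensorProduct.tmul_zero]
  | add x y hx hy => simp [hx, hy]

lemma Lm_Rm_comm (c d : A) (t : A ⊗[ℂ] A) : Lm c (Rm d t) = Rm d (Lm c t) := by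
  induction t using TensorProduct.induction_on with
  | zero => simp
  | tmul x y => simp
  | add x y hx hy => simp [hx, hy]

lemma Lm_smul (r : ℂ) (c : A) (t : A ⊗[ℂ] A) : Lm (r • c) t = r • Lm c t := by
  induction t using TensorProduct.induction_on with
  | zero => simp
  | tmul x y => simp [smul_mul_assoc, TensorProduct.smul_tmul']
  | add x y hx hy => simp [hx, hy]

lemma Rm_smul (r : ℂ) (c : A) (t : A ⊗[ℂ] A) : Rm (r • c) t = r • Rm c t := by
  induction t using TensorProduct.induction_on with
  | zero => simp
  | tmul x y => simp [mul_smul_comm, TensorProduct.tmul_smul]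
  | add x y hx hy => simp [hx, hy]

/-- `Lm` agrees with the canonical left `A`-module structure on `A ⊗[ℂ] A`. -/
lemma Lm_eq_smul (c : A) (t : A ⊗[ℂ] A) : Lm c t = c • t := by
  induction t using TensorProduct.induction_on with
  | zero => simp
  | tmul x y => rw [TensorProduct.smul_tmul']; rfl
  | add x y hx hy => simp [hx, hy, smul_add]

end DiagAux

open DiagAux in
/-- If every derivation from a unital complex algebra `A` into every `A`-bimodule is
inner, then `A` possesses a diagonal in the algebraic tensor product `A ⊗ A`, i.e.
an element `Σᵢ aᵢ ⊗ bᵢ` with `Σᵢ aᵢbᵢ = 1` and `Σᵢ (c·aᵢ) ⊗ bᵢ = Σᵢ aᵢ ⊗ (bᵢ·c)`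
for all `c ∈ A`. (The right action of `A` on a bimodule `M` is encoded as an action
of `Aᵐᵒᵖ`.) -/
theorem derivations_inner_implies_diagonal
    (A : Type) [Ring A] [Algebra ℂ A]
    (h : ∀ (M : Type) [AddCommGroup M] [Module ℂ M]
        [Module A M] [Module Aᵐᵒᵖ M] [SMulCommClass A Aᵐᵒᵖ M]
        [IsScalarTower ℂ A M] [IsScalarTower ℂ Aᵐᵒᵖ M]
        (δ : A →ₗ[ℂ] M),
        (∀ x y : A, δ (x * y) = x • δ y + MulOpposite.op y • δ x) →
        ∃ m : M, ∀ c : A, δ c = c • m - MulOpposite.op c • m) :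
    ∃ (n : ℕ) (a b : Fin n → A),
      ∑ i, a i * b i = 1 ∧
      ∀ c : A, ∑ i, (c * a i) ⊗ₜ[ℂ] b i = ∑ i, a i ⊗ₜ[ℂ] (b i * c) := by
  classical
  -- the kernel of the multiplication map, as a ℂ-submodule
  set J : Submodule ℂ (A ⊗[ℂ] A) := LinearMap.ker (pi A) with hJ
  have memJ : ∀ t : A ⊗[ℂ] A, t ∈ J ↔ pi A t = 0 := fun t => LinearMap.mem_ker
  -- module structures on J
  letI smulA : SMul A J := ⟨fun c x => ⟨Lm c x.1, by
    rw [memJ, pi_Lm, (memJ x.1).1 x.2, mul_zero]⟩⟩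
  letI smulOp : SMul Aᵐᵒᵖ J := ⟨fun c x => ⟨Rm c.unop x.1, by
    rw [memJ, pi_Rm, (memJ x.1).1 x.2, zero_mul]⟩⟩
  have smulA_coe : ∀ (c : A) (x : J), (c • x : J).1 = Lm c x.1 := fun _ _ => rfl
  have smulOp_coe : ∀ (c : Aᵐᵒᵖ) (x : J), (c • x : J).1 = Rm c.unop x.1 := fun _ _ => rfl
  letI modA : Module A J :=
    { smul := fun c x => c • x
      one_smul := fun x => Subtype.ext (Lm_one x.1)
      mul_smul := fun c d x => Subtype.ext (Lm_mul c d x.1)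
      smul_zero := fun c => Subtype.ext (map_zero (Lm c))
      smul_add := fun c x y => Subtype.ext (map_add (Lm c) x.1 y.1)
      add_smul := fun c d x => Subtype.ext (Lm_add c d x.1)
      zero_smul := fun x => Subtype.ext (Lm_zero x.1) }
  letI modOp : Module Aᵐᵒᵖ J :=
    { smul := fun c x => c • x
      one_smul := fun x => Subtype.ext (Rm_one x.1)
      mul_smul := fun c d x => Subtype.ext (Rm_mul d.unop c.unop x.1)
      smul_zero := fun c => Subtype.ext (map_zero (Rm c.unop))
      smul_add := fun c x y => Subtype.ext (map_add (Rm c.unop) x.1 y.1)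
      add_smul := fun c d x => Subtype.ext (Rm_add c.unop d.unop x.1)
      zero_smul := fun x => Subtype.ext (Rm_zero x.1) }
  letI : SMulCommClass A Aᵐᵒᵖ J :=
    ⟨fun c d x => Subtype.ext (Lm_Rm_comm c d.unop x.1)⟩
  letI : IsScalarTower ℂ A J :=
    ⟨fun r c x => Subtype.ext (by
      show Lm (r • c) x.1 = r • Lm c x.1
      exact Lm_smul r c x.1)⟩
  letI : IsScalarTower ℂ Aᵐᵒᵖ J :=
    ⟨fun r c x => Subtype.ext (by
      show Rm ((r • c).unop) x.1 = r • Rm c.unop x.1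
      rw [MulOpposite.unop_smul]
      exact Rm_smul r c.unop x.1)⟩
  -- the derivation c ↦ c ⊗ 1 - 1 ⊗ c
  set δ0 : A →ₗ[ℂ] A ⊗[ℂ] A :=
    (TensorProduct.mk ℂ A A).flip 1 - TensorProduct.mk ℂ A A 1 with hδ0
  have δ0_apply : ∀ c : A, δ0 c = c ⊗ₜ[ℂ] 1 - 1 ⊗ₜ[ℂ] c := fun c => rfl
  have δ0_mem : ∀ c : A, δ0 c ∈ J := fun c => by
    rw [memJ, δ0_apply, map_sub, pi_tmul, pi_tmul, mul_one, one_mul, sub_self]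
  set δ : A →ₗ[ℂ] J := LinearMap.codRestrict J δ0 δ0_mem with hδ
  have δ_coe : ∀ c : A, (δ c).1 = c ⊗ₜ[ℂ] 1 - 1 ⊗ₜ[ℂ] c := fun c => rfl
  have hder : ∀ x y : A, δ (x * y) = x • δ y + MulOpposite.op y • δ x := by
    intro x y
    apply Subtype.ext
    show (x * y) ⊗ₜ[ℂ] 1 - 1 ⊗ₜ[ℂ] (x * y) =
      Lm x ((δ y).1) + Rm y ((δ x).1)
    rw [δ_coe, δ_coe, map_sub, map_sub]
    simp only [Lm_tmul, Rm_tmul, one_mul, mul_one]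
    abel
  obtain ⟨m, hm⟩ := h J δ hder
  -- the diagonal candidate
  set u : A ⊗[ℂ] A := (1 : A) ⊗ₜ[ℂ] 1 - m.1 with hu
  have hπu : pi A u = 1 := by
    rw [hu, map_sub, pi_tmul, one_mul, (memJ m.1).1 m.2, sub_zero]
  have hcomm : ∀ c : A, Lm c u = Rm c u := by
    intro c
    have h1 : (δ c).1 = Lm c m.1 - Rm c m.1 := by
      rw [hm c]
      rfl
    rw [δ_coe] at h1
    rw [hu, map_sub, map_sub, Lm_tmul, Rm_tmul, mul_one, one_mul]
    rw [sub_eq_sub_iff_sub_eq_sub, h1]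
  -- write u as a finite sum of simple tensors
  obtain ⟨S, hS⟩ := TensorProduct.exists_finset u
  set n := S.card with hn
  set e : Fin n ≃ S := (Finset.equivFin S).symm with he
  set a : Fin n → A := fun i => (e i : A × A).1 with ha
  set b : Fin n → A := fun i => (e i : A × A).2 with hb
  have hsum : u = ∑ i : Fin n, a i ⊗ₜ[ℂ] b i := by
    rw [hS, ← Finset.sum_coe_sort S (fun p => p.1 ⊗ₜ[ℂ] p.2),
      ← Equiv.sum_comp e (fun p : S => (p : A × A).1 ⊗ₜ[ℂ] (p : A × A).2)]
  refine ⟨n, a, b, ?_, ?_⟩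
  · have h1 : pi A u = ∑ i, a i * b i := by
      rw [hsum, map_sum]
      simp only [pi_tmul]
    rw [← h1]
    exact hπu
  · intro c
    have hL : Lm c u = ∑ i, (c * a i) ⊗ₜ[ℂ] b i := by
      rw [hsum, map_sum]
      simp only [Lm_tmul]
    have hR : Rm c u = ∑ i, a i ⊗ₜ[ℂ] (b i * c) := by
      rw [hsum, map_sum]
      simp only [Rm_tmul]
    rw [← hL, ← hR, hcomm]
end

section
/- Let A be a finite-dimensional, unital, associative algebra over ℂ. If there exists a diagonal in the algebraic tensor product A ⊗ A, then A is isomorphic (as a ℂ-algebra) to a finite direct sum of full matrix algebras over ℂ; that is, there exist k ∈ ℕ and positive integers n₁, …, n_k such that A ≅ M_{n₁}(ℂ) ⊕ ⋯ ⊕ M_{n_k}(ℂ). -/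
open scoped TensorProduct

/-!
A diagonal `Σᵢ aᵢ ⊗ bᵢ` lets one average any `ℂ`-linear retraction `π` of an `A`-module onto a
submodule into the `A`-linear retraction `m ↦ Σᵢ aᵢ • π (bᵢ • m)`: the diagonal identity makes it
`A`-linear and `Σᵢ aᵢ bᵢ = 1` keeps it a retraction. Hence every `A`-module is semisimple, and the
Wedderburn–Artin theorem over the algebraically closed field `ℂ` finishes the proof.
-/

section Diagonal

variable {K A : Type*} [CommSemiring K] [Semiring A] [Algebra K A] {ι : Type*} [Fintype ι]
  {a b : ι → A}

theorem sum_bilinear_mul_left_eq_mul_right {P : Type*} [AddCommMonoid P] [Module K P]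
    (h2 : ∀ c : A, ∑ i, (c * a i) ⊗ₜ[K] b i = ∑ i, a i ⊗ₜ[K] (b i * c))
    (β : A →ₗ[K] A →ₗ[K] P) (c : A) :
    ∑ i, β (c * a i) (b i) = ∑ i, β (a i) (b i * c) := by
  simpa using congrArg (TensorProduct.lift β) (h2 c)

variable {M P : Type*} [AddCommMonoid M] [Module A M] [Module K M] [IsScalarTower K A M]
  [AddCommMonoid P] [Module A P] [Module K P] [IsScalarTower K A P]

def diagonalAverage (h2 : ∀ c : A, ∑ i, (c * a i) ⊗ₜ[K] b i = ∑ i, a i ⊗ₜ[K] (b i * c))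
    (π : M →ₗ[K] P) : M →ₗ[A] P where
  toFun m := ∑ i, a i • π (b i • m)
  map_add' m m' := by simp [Finset.sum_add_distrib]
  map_smul' c m := by
    have hc := sum_bilinear_mul_left_eq_mul_right h2
      ((Algebra.lsmul K K P).toLinearMap.compl₂
        (π ∘ₗ (LinearMap.toSpanSingleton A M m).restrictScalars K)) c
    simpa [Finset.smul_sum, mul_smul] using hc.symm

theorem diagonalAverage_comp_eq_id (h1 : ∑ i, a i * b i = 1)
    (h2 : ∀ c : A, ∑ i, (c * a i) ⊗ₜ[K] b i = ∑ i, a i ⊗ₜ[K] (b i * c))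
    {f : P →ₗ[A] M} {π : M →ₗ[K] P} (hπ : ∀ p, π (f p) = p) :
    diagonalAverage h2 π ∘ₗ f = LinearMap.id := by
  ext p
  calc ∑ i, a i • π (b i • f p) = ∑ i, a i • b i • p := by simp only [← map_smul, hπ]
    _ = p := by simp only [smul_smul, ← Finset.sum_smul, h1, one_smul]

end Diagonal

section DiagonalOverField

variable {K A : Type*} [Field K] [Ring A] [Algebra K A] {ι : Type*} [Fintype ι] {a b : ι → A}
  {M P : Type*} [AddCommGroup M] [Module A M] [Module K M] [IsScalarTower K A M]
  [AddCommGroup P] [Module A P] [Module K P] [IsScalarTower K A P]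

theorem exists_leftInverse_of_diagonal (h1 : ∑ i, a i * b i = 1)
    (h2 : ∀ c : A, ∑ i, (c * a i) ⊗ₜ[K] b i = ∑ i, a i ⊗ₜ[K] (b i * c))
    (f : P →ₗ[A] M) (hf : Function.Injective f) :
    ∃ g : M →ₗ[A] P, g ∘ₗ f = LinearMap.id :=
  ⟨diagonalAverage h2 (f.restrictScalars K).leftInverse,
    diagonalAverage_comp_eq_id h1 h2
      (LinearMap.leftInverse_apply_of_inj (f := f.restrictScalars K) (LinearMap.ker_eq_bot.2 hf))⟩

theorem isSemisimpleModule_of_diagonal (h1 : ∑ i, a i * b i = 1)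
    (h2 : ∀ c : A, ∑ i, (c * a i) ⊗ₜ[K] b i = ∑ i, a i ⊗ₜ[K] (b i * c)) :
    IsSemisimpleModule A M where
  exists_isCompl N := by
    obtain ⟨g, hg⟩ := exists_leftInverse_of_diagonal h1 h2 N.subtype N.injective_subtype
    exact ⟨LinearMap.ker g, LinearMap.isCompl_of_proj (LinearMap.congr_fun hg)⟩

end DiagonalOverField

/-- If a finite-dimensional unital complex algebra `A` has a diagonal
`Σᵢ aᵢ ⊗ bᵢ` in the algebraic tensor product `A ⊗ A` (so `Σᵢ aᵢbᵢ = 1` and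
`Σᵢ (c·aᵢ) ⊗ bᵢ = Σᵢ aᵢ ⊗ (bᵢ·c)` for all `c`), then `A` is isomorphic as a
ℂ-algebra to a finite direct sum of full matrix algebras over ℂ. -/
theorem findim_algebra_with_diagonal_is_sum_of_matrix_algebras
    (A : Type) [Ring A] [Algebra ℂ A] [FiniteDimensional ℂ A]
    (ι : Type) [Fintype ι] (a b : ι → A)
    (h1 : ∑ i, a i * b i = 1)
    (h2 : ∀ c : A, ∑ i, (c * a i) ⊗ₜ[ℂ] b i = ∑ i, a i ⊗ₜ[ℂ] (b i * c)) :
    ∃ (k : ℕ) (n : Fin k → ℕ), (∀ i, 0 < n i) ∧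
      Nonempty (A ≃ₐ[ℂ] Π i, Matrix (Fin (n i)) (Fin (n i)) ℂ) := by
  have : IsSemisimpleRing A := isSemisimpleModule_of_diagonal h1 h2
  obtain ⟨k, n, hn, e⟩ := IsSemisimpleRing.exists_algEquiv_pi_matrix_of_isAlgClosed ℂ A
  exact ⟨k, n, fun i => Nat.pos_of_ne_zero (hn i).out, e⟩
end

section
/- Let A be a finite-dimensional, unital, associative algebra over ℂ. If there exists a diagonal in the algebraic tensor product A ⊗ A, then A is a semisimple ring. -/
/-!
A diagonal `∑ aᵢ ⊗ bᵢ` turns any `ℂ`-linear projection `p` of an `A`-module onto an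
`A`-submodule into the `A`-linear projection `m ↦ ∑ aᵢ • p (bᵢ • m)`, as in Maschke's theorem:
`A`-linearity comes from applying the bilinear map `x ⊗ y ↦ x • p (y • m)` to the identity
`∑ (c aᵢ) ⊗ bᵢ = ∑ aᵢ ⊗ (bᵢ c)`, and `∑ aᵢ bᵢ = 1` keeps it the identity on the submodule.
Over a field every subspace has a complement, so every `A`-module, in particular `A`, is
semisimple.
-/

open scoped TensorProduct

structure IsDiagonal (R : Type*) {A ι : Type*} [CommRing R] [Ring A] [Algebra R A] [Fintype ι]
    (a b : ι → A) : Prop where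
  sum_mul_eq_one : ∑ i, a i * b i = 1
  sum_mul_tmul_eq : ∀ c : A, ∑ i, (c * a i) ⊗ₜ[R] b i = ∑ i, a i ⊗ₜ[R] (b i * c)

namespace IsDiagonal

variable {R A ι M N : Type*} [CommRing R] [Ring A] [Algebra R A] [Fintype ι] {a b : ι → A}
  [AddCommGroup M] [Module A M] [Module R M] [IsScalarTower R A M]
  [AddCommGroup N] [Module A N] [Module R N] [IsScalarTower R A N]

theorem sum_mul_smul_map_smul (hd : IsDiagonal R a b) (f : M →ₗ[R] N) (c : A) (m : M) :
    ∑ i, (c * a i) • f (b i • m) = ∑ i, a i • f ((b i * c) • m) := by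
  let φ : A →ₗ[R] A →ₗ[R] N := LinearMap.mk₂ R (fun x y => x • f (y • m))
    (fun _ _ _ => add_smul ..) (fun _ _ _ => smul_assoc ..)
    (fun _ _ _ => by simp only [add_smul, map_add, smul_add])
    (fun _ _ _ => by rw [smul_assoc, map_smul, smul_comm])
  simpa only [map_sum, TensorProduct.lift.tmul, φ, LinearMap.mk₂_apply]
    using congrArg (TensorProduct.lift φ) (hd.sum_mul_tmul_eq c)

def average (hd : IsDiagonal R a b) (f : M →ₗ[R] N) : M →ₗ[A] N where
  toFun m := ∑ i, a i • f (b i • m)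
  map_add' m m' := by simp only [smul_add, map_add, ← Finset.sum_add_distrib]
  map_smul' c m := by
    simp only [RingHom.id_apply, Finset.smul_sum, ← smul_assoc, smul_eq_mul,
      hd.sum_mul_smul_map_smul]

theorem average_apply (hd : IsDiagonal R a b) (f : M →ₗ[R] N) (m : M) :
    hd.average f m = ∑ i, a i • f (b i • m) :=
  rfl

theorem isProj_average (hd : IsDiagonal R a b) {P : Submodule A M} {f : M →ₗ[R] M}
    (hf : LinearMap.IsProj (P.restrictScalars R) f) : LinearMap.IsProj P (hd.average f) where
  map_mem m := P.sum_mem fun i _ => P.smul_mem (a i) (hf.map_mem _)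
  map_id m hm := by
    have hfix : ∀ i, f (b i • m) = b i • m := fun i => hf.map_id _ (P.smul_mem (b i) hm)
    simp only [average_apply, hfix, smul_smul, ← Finset.sum_smul, hd.sum_mul_eq_one, one_smul]

theorem exists_isCompl (hd : IsDiagonal R a b) (P : Submodule A M) {Q : Submodule R M}
    (hPQ : IsCompl (P.restrictScalars R) Q) : ∃ Q' : Submodule A M, IsCompl P Q' :=
  ⟨_, (hd.isProj_average ⟨Submodule.projection_apply_mem hPQ,
    fun _ => Submodule.projection_apply_of_mem_left hPQ⟩).isCompl⟩

theorem isSemisimpleModule {K : Type*} [Field K] [Algebra K A] [Module K M]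
    [IsScalarTower K A M] (hd : IsDiagonal K a b) : IsSemisimpleModule A M where
  exists_isCompl P :=
    have ⟨_, hPQ⟩ := Submodule.exists_isCompl (P.restrictScalars K)
    hd.exists_isCompl P hPQ

end IsDiagonal

theorem findim_algebra_with_diagonal_is_semisimple_general
    (A : Type) [Ring A] [Algebra ℂ A]
    (ι : Type) [Fintype ι] (a b : ι → A)
    (h1 : ∑ i, a i * b i = 1)
    (h2 : ∀ c : A, ∑ i, (c * a i) ⊗ₜ[ℂ] b i = ∑ i, a i ⊗ₜ[ℂ] (b i * c)) :
    IsSemisimpleRing A :=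
  (IsDiagonal.mk h1 h2).isSemisimpleModule

/-- If a finite-dimensional unital complex algebra `A` has a diagonal
`Σᵢ aᵢ ⊗ bᵢ` in the algebraic tensor product `A ⊗ A` (so `Σᵢ aᵢbᵢ = 1` and
`Σᵢ (c·aᵢ) ⊗ bᵢ = Σᵢ aᵢ ⊗ (bᵢ·c)` for all `c`), then `A` is a semisimple ring. -/
theorem findim_algebra_with_diagonal_is_semisimple
    (A : Type) [Ring A] [Algebra ℂ A] [FiniteDimensional ℂ A]
    (ι : Type) [Fintype ι] (a b : ι → A)
    (h1 : ∑ i, a i * b i = 1)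
    (h2 : ∀ c : A, ∑ i, (c * a i) ⊗ₜ[ℂ] b i = ∑ i, a i ⊗ₜ[ℂ] (b i * c)) :
    IsSemisimpleRing A :=
  findim_algebra_with_diagonal_is_semisimple_general A ι a b h1 h2
end

section
/- Let H be a complex Hilbert space and let A ⊆ B(H) be a unital subalgebra of the algebra of bounded linear operators on H. Suppose there exist sequences (aᵢ)ᵢ≥1 and (bᵢ)ᵢ≥1 in A such that: (i) the series Σᵢ aᵢaᵢ* and Σᵢ bᵢ*bᵢ converge in operator norm; (ii) Σᵢ aᵢbᵢ = 1 with the series converging in operator norm; (iii) the sequence (aᵢ) is strongly independent, in the sense that the set { (φ(a₁), φ(a₂), …) : φ ∈ A* } is norm dense in ℓ²; and (iv) for every x ∈ A and every continuous linear functional φ ∈ A*, the norm-convergent series satisfy Σᵢ φ(x aᵢ) bᵢ = Σᵢ φ(aᵢ) bᵢ x. Then A is finite dimensional as a complex vector space. -/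
set_option synthInstance.maxHeartbeats 1000000
set_option maxHeartbeats 1000000

open Filter ContinuousLinearMap

open scoped Topology InnerProductSpace

/-!
The inclusion `A → B(H)` is a compact operator, so `A` is finite dimensional by Riesz's theorem.
Since `y = limₙ ∑_{i<n} aᵢ bᵢ y`, it suffices that each `y ↦ bᵢ y` is compact on `A`. Choose
`φ ∈ A*` with `(φ(aⱼ))ⱼ` close to the unit vector `eᵢ` of `ℓ²`. The column estimate
`‖∑ cⱼ bⱼ‖ ≤ ‖c‖₂ ‖∑ bⱼ* bⱼ‖^½` makes `bᵢ y` close to `∑ⱼ φ(aⱼ) bⱼ y`, uniformly on the unit ball;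
by (iv) this is the slice map `y ↦ ∑ⱼ φ(y aⱼ) bⱼ`, and the row estimate for `(aⱼ)` shows that its
partial sums converge in operator norm, so it is a norm limit of finite-rank operators.
-/

namespace ContinuousLinearMap

section Slice

variable {𝕜 E ι : Type*} [RCLike 𝕜] [NormedRing E] [NormedAlgebra 𝕜 E]

/-- For `u = ∑ⱼ aⱼ ⊗ bⱼ`, the truncated slice map `y ↦ (Φ ⊗ id)((y ⊗ 1) u)`. -/
noncomputable def sliceCLM (Φ : E →L[𝕜] 𝕜) (a b : ι → E) (s : Finset ι) : E →L[𝕜] E :=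
  ∑ j ∈ s, (Φ.comp ((mul 𝕜 E).flip (a j))).smulRight (b j)

variable (Φ : E →L[𝕜] 𝕜) (a b : ι → E)

@[simp]
lemma sliceCLM_apply (s : Finset ι) (y : E) : sliceCLM Φ a b s y = ∑ j ∈ s, Φ (y * a j) • b j := by
  simp [sliceCLM]

lemma isCompactOperator_sliceCLM (s : Finset ι) : IsCompactOperator (sliceCLM Φ a b s) := by
  refine Submodule.sum_mem (compactOperator (RingHom.id 𝕜) E E) fun j _ => ?_
  have h := (isCompactOperator_of_locallyCompactSpace_dom (Φ.comp ((mul 𝕜 E).flip (a j)))).clm_comp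
    ((1 : 𝕜 →L[𝕜] 𝕜).smulRight (b j))
  show IsCompactOperator _
  convert h using 1
  ext y
  simp

end Slice

section Hilbert

variable {𝕜 H ι : Type*} [RCLike 𝕜] [NormedAddCommGroup H] [InnerProductSpace 𝕜 H]
  [CompleteSpace H]

lemma sum_norm_apply_sq_le (b : ι → H →L[𝕜] H) (s : Finset ι) (ξ : H) :
    ∑ i ∈ s, ‖b i ξ‖ ^ 2 ≤ ‖∑ i ∈ s, adjoint (b i) * b i‖ * ‖ξ‖ ^ 2 := by
  have hsum : ∑ i ∈ s, ‖b i ξ‖ ^ 2 = RCLike.re ⟪(∑ i ∈ s, adjoint (b i) * b i) ξ, ξ⟫_𝕜 := by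
    simp only [apply_norm_sq_eq_inner_adjoint_left, sum_apply, sum_inner, map_sum]
    rfl
  calc ∑ i ∈ s, ‖b i ξ‖ ^ 2 ≤ ‖(∑ i ∈ s, adjoint (b i) * b i) ξ‖ * ‖ξ‖ :=
        hsum ▸ re_inner_le_norm _ _
    _ ≤ ‖∑ i ∈ s, adjoint (b i) * b i‖ * ‖ξ‖ * ‖ξ‖ := by gcongr; exact le_opNorm _ _
    _ = _ := by ring

lemma norm_sum_smul_le_of_adjoint_mul (b : ι → H →L[𝕜] H) (c : ι → 𝕜) (s : Finset ι) :
    ‖∑ i ∈ s, c i • b i‖ ≤ √(∑ i ∈ s, ‖c i‖ ^ 2) * √‖∑ i ∈ s, adjoint (b i) * b i‖ := by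
  refine opNorm_le_bound _ (by positivity) fun ξ => ?_
  calc ‖(∑ i ∈ s, c i • b i) ξ‖ ≤ ∑ i ∈ s, ‖c i‖ * ‖b i ξ‖ := by
        simpa only [sum_apply, smul_apply, norm_smul] using norm_sum_le s fun i => c i • b i ξ
    _ ≤ √(∑ i ∈ s, ‖c i‖ ^ 2) * √(∑ i ∈ s, ‖b i ξ‖ ^ 2) := Real.sum_mul_le_sqrt_mul_sqrt _ _ _
    _ ≤ √(∑ i ∈ s, ‖c i‖ ^ 2) * √(‖∑ i ∈ s, adjoint (b i) * b i‖ * ‖ξ‖ ^ 2) := by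
        gcongr; exact sum_norm_apply_sq_le b s ξ
    _ = _ := by rw [Real.sqrt_mul (norm_nonneg _), Real.sqrt_sq (norm_nonneg _), mul_assoc]

lemma norm_sum_smul_le_of_mul_adjoint (a : ι → H →L[𝕜] H) (c : ι → 𝕜) (s : Finset ι) :
    ‖∑ i ∈ s, c i • a i‖ ≤ √(∑ i ∈ s, ‖c i‖ ^ 2) * √‖∑ i ∈ s, a i * adjoint (a i)‖ := by
  have h := norm_sum_smul_le_of_adjoint_mul (fun i => adjoint (a i)) (fun i => star (c i)) s
  simp only [← star_eq_adjoint, star_star, norm_star] at h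
  rw [← norm_star, star_sum]
  simpa only [star_smul, ← star_eq_adjoint] using h

lemma sum_norm_sq_apply_mul_le (Φ : (H →L[𝕜] H) →L[𝕜] 𝕜) (y : H →L[𝕜] H)
    (a : ι → H →L[𝕜] H) (s : Finset ι) :
    ∑ i ∈ s, ‖Φ (y * a i)‖ ^ 2 ≤ (‖Φ‖ * ‖y‖) ^ 2 * ‖∑ i ∈ s, a i * adjoint (a i)‖ := by
  set S := ∑ i ∈ s, ‖Φ (y * a i)‖ ^ 2
  have hS : (S : 𝕜) = Φ (y * ∑ i ∈ s, star (Φ (y * a i)) • a i) := by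
    simp only [S, Finset.mul_sum, mul_smul_comm, map_sum, map_smul, smul_eq_mul,
      RCLike.star_def, RCLike.conj_mul, RCLike.ofReal_pow]
  have hK : S ≤ ‖Φ‖ * ‖y‖ * √‖∑ i ∈ s, a i * adjoint (a i)‖ * √S := by
    calc S = ‖(S : 𝕜)‖ := by rw [RCLike.norm_ofReal, abs_of_nonneg (by positivity)]
      _ ≤ ‖Φ‖ * (‖y‖ * ‖∑ i ∈ s, star (Φ (y * a i)) • a i‖) := by
          rw [hS]; exact (le_opNorm _ _).trans (by gcongr; exact norm_mul_le _ _)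
      _ ≤ ‖Φ‖ * (‖y‖ * (√S * √‖∑ i ∈ s, a i * adjoint (a i)‖)) := by
          gcongr
          simpa only [norm_star] using
            norm_sum_smul_le_of_mul_adjoint a (fun i => star (Φ (y * a i))) s
      _ = _ := by ring
  calc S ≤ (‖Φ‖ * ‖y‖ * √‖∑ i ∈ s, a i * adjoint (a i)‖) ^ 2 := by
        nlinarith [Real.sq_sqrt (show 0 ≤ S by positivity), Real.sqrt_nonneg S]
    _ = _ := by rw [mul_pow, Real.sq_sqrt (norm_nonneg _)]

lemma norm_sliceCLM_le (Φ : (H →L[𝕜] H) →L[𝕜] 𝕜) (a b : ι → H →L[𝕜] H) (s : Finset ι) :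
    ‖sliceCLM Φ a b s‖ ≤
      ‖Φ‖ * √‖∑ j ∈ s, a j * adjoint (a j)‖ * √‖∑ j ∈ s, adjoint (b j) * b j‖ := by
  refine opNorm_le_bound _ (by positivity) fun y => ?_
  have hcoeff : √(∑ j ∈ s, ‖Φ (y * a j)‖ ^ 2) ≤ ‖Φ‖ * ‖y‖ * √‖∑ j ∈ s, a j * adjoint (a j)‖ := by
    rw [← Real.sqrt_sq (by positivity : 0 ≤ ‖Φ‖ * ‖y‖), ← Real.sqrt_mul (sq_nonneg _)]
    exact Real.sqrt_le_sqrt (sum_norm_sq_apply_mul_le Φ y a s)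
  calc ‖sliceCLM Φ a b s y‖
      ≤ √(∑ j ∈ s, ‖Φ (y * a j)‖ ^ 2) * √‖∑ j ∈ s, adjoint (b j) * b j‖ := by
        rw [sliceCLM_apply]; exact norm_sum_smul_le_of_adjoint_mul b _ s
    _ ≤ ‖Φ‖ * ‖y‖ * √‖∑ j ∈ s, a j * adjoint (a j)‖ * √‖∑ j ∈ s, adjoint (b j) * b j‖ := by
        gcongr
    _ = _ := by ring

section Nat

variable (Φ : (H →L[𝕜] H) →L[𝕜] 𝕜) (a b : ℕ → H →L[𝕜] H)

lemma dist_sliceCLM_range_le (m n : ℕ) :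
    dist (sliceCLM Φ a b (Finset.range m)) (sliceCLM Φ a b (Finset.range n)) ≤
      ‖Φ‖ * √(dist (∑ j ∈ Finset.range m, a j * adjoint (a j))
          (∑ j ∈ Finset.range n, a j * adjoint (a j))) *
        √(dist (∑ j ∈ Finset.range m, adjoint (b j) * b j)
          (∑ j ∈ Finset.range n, adjoint (b j) * b j)) := by
  wlog hnm : n ≤ m generalizing m n
  · rw [dist_comm, dist_comm (∑ j ∈ _, a j * _), dist_comm (∑ j ∈ _, adjoint (b j) * _)]
    exact this n m (le_of_not_ge hnm)
  simp only [dist_eq_norm, sliceCLM, ← Finset.sum_Ico_eq_sub _ hnm]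
  exact norm_sliceCLM_le Φ a b _

lemma cauchySeq_sliceCLM_range
    (ha : CauchySeq fun m => ∑ j ∈ Finset.range m, a j * adjoint (a j))
    (hb : CauchySeq fun m => ∑ j ∈ Finset.range m, adjoint (b j) * b j) :
    CauchySeq fun m => sliceCLM Φ a b (Finset.range m) := by
  rw [cauchySeq_iff_tendsto_dist_atTop_0] at ha hb ⊢
  refine squeeze_zero (fun _ => dist_nonneg) (fun p => dist_sliceCLM_range_le Φ a b p.1 p.2) ?_
  simpa using ((ha.sqrt).const_mul ‖Φ‖).mul hb.sqrt

lemma exists_isCompactOperator_tendsto_sliceCLM_range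
    (ha : CauchySeq fun m => ∑ j ∈ Finset.range m, a j * adjoint (a j))
    (hb : CauchySeq fun m => ∑ j ∈ Finset.range m, adjoint (b j) * b j) :
    ∃ R : (H →L[𝕜] H) →L[𝕜] H →L[𝕜] H,
      IsCompactOperator R ∧ Tendsto (fun m => sliceCLM Φ a b (Finset.range m)) atTop (𝓝 R) := by
  obtain ⟨R, hR⟩ := cauchySeq_tendsto_of_complete (cauchySeq_sliceCLM_range Φ a b ha hb)
  exact ⟨R, isCompactOperator_of_tendsto hR (.of_forall fun m =>
    isCompactOperator_sliceCLM Φ a b (Finset.range m)), hR⟩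

lemma norm_sum_range_smul_le_lp (v : lp (fun _ : ℕ => 𝕜) 2) (m : ℕ) :
    ‖∑ j ∈ Finset.range m, v j • b j‖ ≤
      ‖v‖ * √‖∑ j ∈ Finset.range m, adjoint (b j) * b j‖ := by
  refine (norm_sum_smul_le_of_adjoint_mul b _ _).trans ?_
  gcongr
  have h := lp.sum_rpow_le_norm_rpow (p := 2) (by norm_num) v (Finset.range m)
  simp only [ENNReal.toReal_ofNat, Real.rpow_two] at h
  exact (Real.sqrt_le_sqrt h).trans_eq (Real.sqrt_sq (norm_nonneg v))

lemma norm_sub_sum_range_smul_le_lp (v : lp (fun _ : ℕ => 𝕜) 2) {i m : ℕ} (him : i < m) :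
    ‖b i - ∑ j ∈ Finset.range m, v j • b j‖ ≤
      ‖lp.single 2 i 1 - v‖ * √‖∑ j ∈ Finset.range m, adjoint (b j) * b j‖ := by
  convert norm_sum_range_smul_le_lp b (lp.single 2 i 1 - v) m using 2
  simp [sub_smul, Pi.single_apply, Finset.sum_sub_distrib, him]

lemma norm_mul_sub_le_of_tendsto_sliceCLM {Φ : (H →L[𝕜] H) →L[𝕜] 𝕜} {v : lp (fun _ : ℕ => 𝕜) 2}
    (hv : ∀ j, v j = Φ (a j)) {R : (H →L[𝕜] H) →L[𝕜] H →L[𝕜] H}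
    (hR : Tendsto (fun m => sliceCLM Φ a b (Finset.range m)) atTop (𝓝 R)) {Sb : H →L[𝕜] H}
    (hSb : Tendsto (fun m => ∑ j ∈ Finset.range m, adjoint (b j) * b j) atTop (𝓝 Sb))
    {y : H →L[𝕜] H}
    (hy : ∃ S, Tendsto (fun m => ∑ j ∈ Finset.range m, Φ (y * a j) • b j) atTop (𝓝 S) ∧
      Tendsto (fun m => ∑ j ∈ Finset.range m, Φ (a j) • (b j * y)) atTop (𝓝 S)) (i : ℕ) :
    ‖b i * y - R y‖ ≤ ‖lp.single 2 i 1 - v‖ * √‖Sb‖ * ‖y‖ := by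
  obtain ⟨S, hS, hS'⟩ := hy
  have hRy : R y = S := by
    have h := ((continuous_eval_const y).tendsto R).comp hR
    simp only [Function.comp_def, sliceCLM_apply] at h
    exact tendsto_nhds_unique h hS
  rw [hRy]
  refine le_of_tendsto_of_tendsto ((tendsto_const_nhds.sub hS').norm)
    (((hSb.norm.sqrt).const_mul _).mul_const _) ?_
  filter_upwards [eventually_gt_atTop i] with m him
  calc ‖b i * y - ∑ j ∈ Finset.range m, Φ (a j) • (b j * y)‖
      = ‖(b i - ∑ j ∈ Finset.range m, v j • b j) * y‖ := by
        simp only [hv, sub_mul, Finset.sum_mul, smul_mul_assoc]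
    _ ≤ _ := (norm_mul_le _ _).trans (by gcongr; exact norm_sub_sum_range_smul_le_lp b v him)

lemma isCompactOperator_mul_comp_of_mem_closure {F : Type*} [NormedAddCommGroup F] [NormedSpace 𝕜 F]
    (ι : F →L[𝕜] H →L[𝕜] H)
    (ha : CauchySeq fun m => ∑ j ∈ Finset.range m, a j * adjoint (a j)) {Sb : H →L[𝕜] H}
    (hSb : Tendsto (fun m => ∑ j ∈ Finset.range m, adjoint (b j) * b j) atTop (𝓝 Sb))
    (hmod : ∀ (Φ : (H →L[𝕜] H) →L[𝕜] 𝕜) (y : F), ∃ S,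
      Tendsto (fun m => ∑ j ∈ Finset.range m, Φ (ι y * a j) • b j) atTop (𝓝 S) ∧
      Tendsto (fun m => ∑ j ∈ Finset.range m, Φ (a j) • (b j * ι y)) atTop (𝓝 S))
    {i : ℕ} (hi : lp.single 2 i 1 ∈ closure {v : lp (fun _ : ℕ => 𝕜) 2 |
      ∃ Φ : (H →L[𝕜] H) →L[𝕜] 𝕜, ∀ j, v j = Φ (a j)}) :
    IsCompactOperator ((mul 𝕜 (H →L[𝕜] H) (b i)).comp ι) := by
  obtain ⟨v, hv, hvi⟩ := mem_closure_iff_seq_limit.1 hi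
  choose Φ hΦ using hv
  choose R hRc hR using fun k =>
    exists_isCompactOperator_tendsto_sliceCLM_range (Φ k) a b ha hSb.cauchySeq
  have hRb (k : ℕ) : dist ((R k).comp ι) ((mul 𝕜 (H →L[𝕜] H) (b i)).comp ι) ≤
      dist (v k) (lp.single 2 i 1) * √‖Sb‖ * ‖ι‖ := by
    have h : ‖(R k).comp ι - (mul 𝕜 (H →L[𝕜] H) (b i)).comp ι‖ ≤
        ‖lp.single 2 i 1 - v k‖ * √‖Sb‖ * ‖ι‖ := by
      refine opNorm_le_bound _ (by positivity) fun y => ?_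
      rw [sub_apply, norm_sub_rev, mul_assoc _ ‖ι‖]
      refine (norm_mul_sub_le_of_tendsto_sliceCLM a b (hΦ k) (hR k) hSb (hmod (Φ k) y) i).trans ?_
      gcongr
      exact le_opNorm ι y
    rw [dist_comm (v k), dist_eq_norm (lp.single 2 i 1)]
    exact (dist_eq_norm ((R k).comp ι) ((mul 𝕜 (H →L[𝕜] H) (b i)).comp ι)).trans_le h
  have hRι (k : ℕ) : IsCompactOperator ((R k).comp ι) := (hRc k).comp_clm ι
  have hlim : Tendsto (fun k => (R k).comp ι) atTop (𝓝 ((mul 𝕜 (H →L[𝕜] H) (b i)).comp ι)) := by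
    refine tendsto_iff_dist_tendsto_zero.2 (squeeze_zero (fun _ => dist_nonneg) hRb ?_)
    simpa using ((tendsto_iff_dist_tendsto_zero.1 hvi).mul_const √‖Sb‖).mul_const ‖ι‖
  exact isCompactOperator_of_tendsto hlim (.of_forall hRι)

end Nat

end Hilbert

lemma isCompactOperator_of_tendsto_sum_mul {𝕜 E F : Type*} [NontriviallyNormedField 𝕜]
    [NormedRing E] [NormedAlgebra 𝕜 E] [CompleteSpace E] [NormedAddCommGroup F] [NormedSpace 𝕜 F]
    (ι : F →L[𝕜] E) {a b : ℕ → E}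
    (hone : Tendsto (fun N => ∑ i ∈ Finset.range N, a i * b i) atTop (𝓝 1))
    (hb : ∀ i, IsCompactOperator ((mul 𝕜 E (b i)).comp ι)) :
    IsCompactOperator ι := by
  have hlim : Tendsto (fun N => (mul 𝕜 E (∑ i ∈ Finset.range N, a i * b i)).comp ι) atTop
      (𝓝 ι) := by
    have h := ((mul 𝕜 E).continuous.clm_comp_const ι).tendsto 1 |>.comp hone
    have h1 : (mul 𝕜 E 1).comp ι = ι := by ext; simp
    rwa [h1] at h
  have hsum (N : ℕ) : (mul 𝕜 E (∑ i ∈ Finset.range N, a i * b i)).comp ι =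
      ∑ i ∈ Finset.range N, (mul 𝕜 E (a i)).comp ((mul 𝕜 E (b i)).comp ι) := by
    ext y
    simp [mul_assoc]
  refine isCompactOperator_of_tendsto hlim (.of_forall fun N => ?_)
  rw [hsum]
  exact Submodule.sum_mem (compactOperator (RingHom.id 𝕜) F E) fun i _ =>
    (hb i).clm_comp (mul 𝕜 E (a i))

end ContinuousLinearMap

lemma FiniteDimensional.of_isCompactOperator_of_isUniformInducing {𝕜 F E : Type*}
    [NontriviallyNormedField 𝕜] [CompleteSpace 𝕜] [NormedAddCommGroup F] [NormedSpace 𝕜 F]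
    [UniformSpace E] {ι : F → E} (hc : IsCompactOperator ι) (hι : IsUniformInducing ι) :
    FiniteDimensional 𝕜 F := by
  obtain ⟨K, hK, hKι⟩ := hc
  exact .of_totallyBounded_nhds_zero 𝕜 hKι (totallyBounded_preimage hι hK.totallyBounded)


theorem subalgebra_with_haagerup_diagonal_finiteDimensional_general
    (H : Type) [NormedAddCommGroup H] [InnerProductSpace ℂ H] [CompleteSpace H]
    (A : Subalgebra ℂ (H →L[ℂ] H))
    (a b : ℕ → H →L[ℂ] H) (ha : ∀ i, a i ∈ A)
    (hsa : ∃ Sa : H →L[ℂ] H,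
      Tendsto (fun N => ∑ i ∈ Finset.range N, a i * adjoint (a i)) atTop (nhds Sa))
    (hsb : ∃ Sb : H →L[ℂ] H,
      Tendsto (fun N => ∑ i ∈ Finset.range N, adjoint (b i) * b i) atTop (nhds Sb))
    (hone : Tendsto (fun N => ∑ i ∈ Finset.range N, a i * b i) atTop (nhds 1))
    (hdense : Dense {v : lp (fun _ : ℕ => ℂ) 2 |
      ∃ φ : A →L[ℂ] ℂ, ∀ i, v i = φ ⟨a i, ha i⟩})
    (hmod : ∀ (x : H →L[ℂ] H) (hx : x ∈ A) (φ : A →L[ℂ] ℂ),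
      ∃ S : H →L[ℂ] H,
        Tendsto (fun N => ∑ i ∈ Finset.range N,
          φ ⟨x * a i, mul_mem hx (ha i)⟩ • b i) atTop (nhds S) ∧
        Tendsto (fun N => ∑ i ∈ Finset.range N,
          φ ⟨a i, ha i⟩ • (b i * x)) atTop (nhds S)) :
    FiniteDimensional ℂ A := by
  obtain ⟨Sa, hSa⟩ := hsa
  obtain ⟨Sb, hSb⟩ := hsb
  set ι := A.toSubmodule.subtypeL
  have hdense' : Dense {v : lp (fun _ : ℕ => ℂ) 2 |
      ∃ Φ : (H →L[ℂ] H) →L[ℂ] ℂ, ∀ j, v j = Φ (a j)} := by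
    refine hdense.mono ?_
    rintro v ⟨φ, hφ⟩
    obtain ⟨Φ, hΦ, -⟩ := exists_extension_norm_eq A.toSubmodule φ
    exact ⟨Φ, fun j => (hφ j).trans (hΦ ⟨a j, ha j⟩).symm⟩
  have hbι (i : ℕ) : IsCompactOperator ((mul ℂ (H →L[ℂ] H) (b i)).comp ι) :=
    isCompactOperator_mul_comp_of_mem_closure a b ι hSa.cauchySeq hSb
      (fun Φ y => hmod y y.2 (Φ.comp ι)) (hdense' _)
  exact .of_isCompactOperator_of_isUniformInducing (𝕜 := ℂ)
    (isCompactOperator_of_tendsto_sum_mul ι hone hbι)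
    isUniformEmbedding_subtype_val.isUniformInducing

/-- **Main theorem (concrete form).** Let `A` be a unital subalgebra of `B(H)` for a
complex Hilbert space `H`.  Suppose there are sequences `(aᵢ)`, `(bᵢ)` in `A` such that
(i) the series `Σᵢ aᵢaᵢ*` and `Σᵢ bᵢ*bᵢ` converge in operator norm;
(ii) `Σᵢ aᵢbᵢ = 1` in operator norm;
(iii) `(aᵢ)` is strongly independent: `{(φ(a₁), φ(a₂), …) : φ ∈ A*}` is norm dense in `ℓ²`;
(iv) for every `x ∈ A` and `φ ∈ A*` the norm-convergent series satisfy
`Σᵢ φ(xaᵢ)bᵢ = Σᵢ φ(aᵢ)bᵢx`.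
Then `A` is finite dimensional over ℂ.  (This is the concrete form of `A` having a
diagonal in the Haagerup tensor product `A ⊗ₕ A`.) -/
theorem subalgebra_with_haagerup_diagonal_finiteDimensional
    (H : Type) [NormedAddCommGroup H] [InnerProductSpace ℂ H] [CompleteSpace H]
    (A : Subalgebra ℂ (H →L[ℂ] H))
    (a b : ℕ → H →L[ℂ] H) (ha : ∀ i, a i ∈ A) (hb : ∀ i, b i ∈ A)
    (hsa : ∃ Sa : H →L[ℂ] H,
      Tendsto (fun N => ∑ i ∈ Finset.range N, a i * adjoint (a i)) atTop (nhds Sa))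
    (hsb : ∃ Sb : H →L[ℂ] H,
      Tendsto (fun N => ∑ i ∈ Finset.range N, adjoint (b i) * b i) atTop (nhds Sb))
    (hone : Tendsto (fun N => ∑ i ∈ Finset.range N, a i * b i) atTop (nhds 1))
    (hdense : Dense {v : lp (fun _ : ℕ => ℂ) 2 |
      ∃ φ : A →L[ℂ] ℂ, ∀ i, v i = φ ⟨a i, ha i⟩})
    (hmod : ∀ (x : H →L[ℂ] H) (hx : x ∈ A) (φ : A →L[ℂ] ℂ),
      ∃ S : H →L[ℂ] H,
        Tendsto (fun N => ∑ i ∈ Finset.range N,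
          φ ⟨x * a i, mul_mem hx (ha i)⟩ • b i) atTop (nhds S) ∧
        Tendsto (fun N => ∑ i ∈ Finset.range N,
          φ ⟨a i, ha i⟩ • (b i * x)) atTop (nhds S)) :
    FiniteDimensional ℂ A :=
  subalgebra_with_haagerup_diagonal_finiteDimensional_general H A a b ha hsa hsb hone hdense hmod
end

section
/- Let A be a unital associative algebra over ℂ and suppose there is an injective unital ℂ-algebra homomorphism π : A → M_{n₁}(ℂ) × ⋯ × M_{n_k}(ℂ) such that each coordinate map πᵢ : A → M_{nᵢ}(ℂ) is surjective. Then A is isomorphic as a ℂ-algebra to a finite direct sum of full matrix algebras over ℂ; in fact A ≅ M_{m₁}(ℂ) ⊕ ⋯ ⊕ M_{m_r}(ℂ) where {m₁, …, m_r} can be taken among {n₁, …, n_k}. -/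
/-- If a unital complex algebra `A` embeds injectively into a finite product of matrix
algebras `M_{n₁}(ℂ) × ⋯ × M_{n_k}(ℂ)` via a unital algebra homomorphism whose every
coordinate map is surjective, then `A` is isomorphic as a ℂ-algebra to a finite direct
sum of full matrix algebras whose sizes occur among `n₁, …, n_k`. -/
theorem subdirect_product_of_matrix_algebras
    (A : Type) [Ring A] [Algebra ℂ A] (k : ℕ) (n : Fin k → ℕ)
    (π : A →ₐ[ℂ] Π i, Matrix (Fin (n i)) (Fin (n i)) ℂ)
    (hinj : Function.Injective π)
    (hsurj : ∀ i, Function.Surjective (fun a : A => π a i)) :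
    ∃ (r : ℕ) (m : Fin r → ℕ) (ι : Fin r → Fin k),
      Function.Injective ι ∧ (∀ j, m j = n (ι j)) ∧
      Nonempty (A ≃ₐ[ℂ] Π j, Matrix (Fin (m j)) (Fin (m j)) ℂ) := by
  classical
  set K : Fin k → Set A := fun i => {a : A | π a i = 0} with hKdef
  -- key separation: if some element vanishes at `i'` but not at `i`, then by simplicity of
  -- the matrix algebra at `i` we can find `u` with `π u i = 1`, `π u i' = 0`.
  have key : ∀ i i' : Fin k, ∀ x : A, π x i ≠ 0 → π x i' = 0 →
      ∃ u : A, π u i = 1 ∧ π u i' = 0 := by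
    intro i i' x hx1 hx2
    haveI : Nonempty (Fin (n i)) := by
      by_contra hne
      rw [not_nonempty_iff] at hne
      refine hx1 ?_
      ext i0 j0
      exact hne.elim i0
    set J : TwoSidedIdeal (Matrix (Fin (n i)) (Fin (n i)) ℂ) :=
      TwoSidedIdeal.mk' {y | ∃ a : A, π a i' = 0 ∧ π a i = y}
        ⟨0, by simp⟩
        (by
          rintro y z ⟨a, ha1, ha2⟩ ⟨b, hb1, hb2⟩
          exact ⟨a + b, by simp [ha1, hb1], by simp [ha2, hb2]⟩)
        (by
          rintro y ⟨a, ha1, ha2⟩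
          exact ⟨-a, by simp [ha1], by simp [ha2]⟩)
        (by
          rintro y z ⟨a, ha1, ha2⟩
          obtain ⟨c, hc⟩ := hsurj i y
          refine ⟨c * a, ?_, ?_⟩
          · have : π (c * a) i' = π c i' * π a i' := by rw [map_mul]; rfl
            rw [this, ha1, mul_zero]
          · have : π (c * a) i = π c i * π a i := by rw [map_mul]; rfl
            have hc' : π c i = y := hc
            rw [this, ha2, hc'])
        (by
          rintro y z ⟨a, ha1, ha2⟩
          obtain ⟨c, hc⟩ := hsurj i z
          refine ⟨a * c, ?_, ?_⟩
          · have : π (a * c) i' = π a i' * π c i' := by rw [map_mul]; rfl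
            rw [this, ha1, zero_mul]
          · have : π (a * c) i = π a i * π c i := by rw [map_mul]; rfl
            have hc' : π c i = z := hc
            rw [this, ha2, hc']) with hJdef
    have hxJ : π x i ∈ J := by
      rw [hJdef, TwoSidedIdeal.mem_mk']
      exact ⟨x, hx2, rfl⟩
    have h1 : (1 : Matrix (Fin (n i)) (Fin (n i)) ℂ) ∈ J :=
      IsSimpleRing.one_mem_of_ne_zero_mem J hx1 hxJ
    rw [hJdef, TwoSidedIdeal.mem_mk'] at h1
    obtain ⟨u, hu1, hu2⟩ := h1
    exact ⟨u, hu2, hu1⟩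
  -- comaximality of distinct kernels
  have comax : ∀ i i' : Fin k, K i ≠ K i' → ∃ u : A, π u i = 1 ∧ π u i' = 0 := by
    intro i i' hne
    have hx : ∃ a : A, ¬ (π a i = 0 ↔ π a i' = 0) := by
      by_contra hc
      push_neg at hc
      exact hne (Set.ext fun a => hc a)
    obtain ⟨x, hx⟩ := hx
    by_cases h1 : π x i = 0
    · have h2 : π x i' ≠ 0 := by tauto
      obtain ⟨v, hv1, hv2⟩ := key i' i x h2 h1
      refine ⟨1 - v, ?_, ?_⟩
      · have : π (1 - v) i = π 1 i - π v i := by rw [map_sub]; rfl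
        rw [this, hv2]
        simp
      · have : π (1 - v) i' = π 1 i' - π v i' := by rw [map_sub]; rfl
        rw [this, hv1]
        simp
    · have h2 : π x i' = 0 := by tauto
      exact key i i' x h1 h2
  -- choose canonical representatives of the equivalence "same kernel"
  have hrepne : ∀ i : Fin k, (Finset.univ.filter (fun j => K j = K i)).Nonempty :=
    fun i => ⟨i, by simp⟩
  set rep : Fin k → Fin k :=
    fun i => (Finset.univ.filter (fun j => K j = K i)).min' (hrepne i) with hrepdef
  have hrepK : ∀ i, K (rep i) = K i := by
    intro i
    have := Finset.min'_mem _ (hrepne i)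
    simpa using (Finset.mem_filter.1 this).2
  have hreple : ∀ i i', K i = K i' → rep i ≤ rep i' := by
    intro i i' h
    apply Finset.min'_le
    simp only [Finset.mem_filter, Finset.mem_univ, true_and]
    exact (hrepK i').trans h.symm
  have hrepeq : ∀ i i', K i = K i' → rep i = rep i' :=
    fun i i' h => le_antisymm (hreple i i' h) (hreple i' i h.symm)
  set S : Finset (Fin k) := Finset.univ.image rep with hSdef
  set e := S.orderIsoOfFin rfl with hedef
  set ι : Fin S.card → Fin k := fun j => (e j : Fin k) with hιdef
  have hιinj : Function.Injective ι := by
    intro a b hab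
    exact e.toEquiv.injective (Subtype.coe_injective hab)
  have hSfix : ∀ s ∈ S, rep s = s := by
    intro s hs
    rw [hSdef] at hs
    obtain ⟨i, _, rfl⟩ := Finset.mem_image.1 hs
    exact hrepeq _ _ (hrepK i)
  have hιS : ∀ j, ι j ∈ S := fun j => (e j).2
  have hcov : ∀ i : Fin k, ∃ j, ι j = rep i := by
    intro i
    have hmem : rep i ∈ S := Finset.mem_image.2 ⟨i, Finset.mem_univ i, rfl⟩
    exact ⟨e.symm ⟨rep i, hmem⟩, by simp [hιdef]⟩
  have hdist : ∀ j j', K (ι j) = K (ι j') → j = j' := by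
    intro j j' h
    have : ι j = ι j' := by
      rw [← hSfix _ (hιS j), ← hSfix _ (hιS j')]
      exact hrepeq _ _ h
    exact hιinj this
  -- the restricted map
  set φ : A →ₐ[ℂ] Π j : Fin S.card, Matrix (Fin (n (ι j))) (Fin (n (ι j))) ℂ :=
    Pi.algHom ℂ _ (fun j => (Pi.evalAlgHom ℂ _ (ι j)).comp π) with hφdef
  have hφ_apply : ∀ (a : A) (j : Fin S.card), φ a j = π a (ι j) := fun a j => rfl
  have hφinj : Function.Injective φ := by
    rw [injective_iff_map_eq_zero]
    intro a ha
    have hz : π a = 0 := by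
      funext i
      obtain ⟨j, hj⟩ := hcov i
      have haj : π a (ι j) = 0 := by
        have := congrFun ha j
        rwa [hφ_apply] at this
      have hmem : a ∈ K (ι j) := haj
      rw [hj, hrepK] at hmem
      exact hmem
    exact hinj (hz.trans (map_zero π).symm)
  have hφsurj : Function.Surjective φ := by
    intro x
    choose b hb using fun j => hsurj (ι j) (x j)
    have husep : ∀ j j' : Fin S.card, ∃ u : A,
        j ≠ j' → (π u (ι j) = 1 ∧ π u (ι j') = 0) := by
      intro j j'
      by_cases h : j = j'
      · exact ⟨0, fun hh => absurd h hh⟩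
      · obtain ⟨u, hu⟩ := comax (ι j) (ι j') (fun hK => h (hdist _ _ hK))
        exact ⟨u, fun _ => hu⟩
    choose u hu using husep
    set L : Fin S.card → List A :=
      fun j => ((List.finRange S.card).filter (fun j' => j' ≠ j)).map (u j) with hLdef
    refine ⟨∑ j, (L j).prod * b j, ?_⟩
    funext j0
    have hsum : φ (∑ j, (L j).prod * b j) j0 = ∑ j, π ((L j).prod * b j) (ι j0) := by
      rw [hφ_apply, map_sum]
      exact Finset.sum_apply _ _ _
    have hprodeval : ∀ j, π ((L j).prod) (ι j0)
        = (((List.finRange S.card).filter (fun j' => j' ≠ j)).map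
            (fun j' => π (u j j') (ι j0))).prod := by
      intro j
      rw [hLdef]
      rw [map_list_prod π]
      have := map_list_prod (Pi.evalMonoidHom
        (fun i => Matrix (Fin (n i)) (Fin (n i)) ℂ) (ι j0))
        ((((List.finRange S.card).filter (fun j' => j' ≠ j)).map (u j)).map π)
      simp only [Pi.evalMonoidHom_apply] at this
      rw [this, List.map_map, List.map_map]
      rfl
    have hterm : ∀ j, π ((L j).prod * b j) (ι j0) = if j = j0 then x j0 else 0 := by
      intro j
      have hmul : π ((L j).prod * b j) (ι j0) = π ((L j).prod) (ι j0) * π (b j) (ι j0) := by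
        rw [map_mul]; rfl
      by_cases hj : j = j0
      · subst hj
        rw [if_pos rfl, hmul, hprodeval]
        have hone : (((List.finRange S.card).filter (fun j' => j' ≠ j)).map
            (fun j' => π (u j j') (ι j))).prod = 1 := by
          apply List.prod_eq_one
          intro y hy
          rw [List.mem_map] at hy
          obtain ⟨j', hj', rfl⟩ := hy
          have hne : j' ≠ j := by
            have := List.of_mem_filter hj'
            simpa using this
          exact (hu j j' (Ne.symm hne)).1
        rw [hone, one_mul]
        exact hb j
      · rw [if_neg hj, hmul, hprodeval]
        have hzero : (((List.finRange S.card).filter (fun j' => j' ≠ j)).map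
            (fun j' => π (u j j') (ι j0))).prod = 0 := by
          apply List.prod_eq_zero
          rw [List.mem_map]
          refine ⟨j0, ?_, (hu j j0 hj).2⟩
          rw [List.mem_filter]
          exact ⟨List.mem_finRange j0, by simpa using Ne.symm hj⟩
        rw [hzero, zero_mul]
    rw [hsum, Finset.sum_congr rfl (fun j _ => hterm j)]
    simp
  exact ⟨S.card, fun j => n (ι j), ι, hιinj, fun j => rfl,
    ⟨AlgEquiv.ofBijective φ ⟨hφinj, hφsurj⟩⟩⟩
end

section
/- Let A be a Banach algebra over ℂ that is isomorphic as a ℂ-algebra to a finite direct sum of full matrix algebras M_{n₁}(ℂ) ⊕ ⋯ ⊕ M_{n_k}(ℂ). Then for every bounded Banach A-bimodule X, every bounded derivation δ : A → X is inner; that is, H¹(A, X) = 0 for every bounded Banach A-bimodule X. -/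
/-!
A finite sum of full matrix algebras is separable: in each block the matrix units give
`e = ∑ⱼ E_{j j₀} ⊗ E_{j₀ j}`, and the sum of these over the blocks satisfies `μ(e) = 1` and
`(a ⊗ 1) e = e (1 ⊗ a)`. For a derivation `δ`, the map `p ⊗ q ↦ p·δ(q)` sends `(a ⊗ 1) e` to
`a·m` and `e (1 ⊗ a)` to `δ(a) + m·a`, where `m` is the image of `e`; hence `δ(a) = a·m - m·a`.
-/

open TensorProduct MulOpposite

structure IsSeparabilityElement (R : Type*) {A : Type*} [CommSemiring R] [Semiring A]
    [Algebra R A] (e : A ⊗[R] A) : Prop where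
  mul'_eq_one : LinearMap.mul' R A e = 1
  tmul_one_mul_eq_mul_one_tmul : ∀ a : A, (a ⊗ₜ[R] 1) * e = e * (1 ⊗ₜ[R] a)

section Bimodule

variable {R A X : Type*} [CommSemiring R] [Semiring A] [Algebra R A]
  [AddCommGroup X] [Module R X] [Module A X] [IsScalarTower R A X]

def tensorSmul (f : A →ₗ[R] X) : A ⊗[R] A →ₗ[R] X :=
  haveI : SMulCommClass R A X := IsScalarTower.to_smulCommClass
  lift (LinearMap.mk₂ R (fun p q => p • f q) (fun _ _ _ => add_smul ..)
    (fun _ _ _ => smul_assoc ..) (fun _ _ _ => by rw [map_add, smul_add])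
    (fun _ _ _ => by rw [map_smul, smul_comm]))

@[simp]
lemma tensorSmul_tmul (f : A →ₗ[R] X) (p q : A) : tensorSmul f (p ⊗ₜ q) = p • f q := rfl

lemma tensorSmul_tmul_one_mul (f : A →ₗ[R] X) (a : A) (t : A ⊗[R] A) :
    tensorSmul f ((a ⊗ₜ 1) * t) = a • tensorSmul f t := by
  induction t using TensorProduct.induction_on with
  | zero => simp
  | tmul p q => simp [mul_smul]
  | add s t hs ht => simp only [mul_add, map_add, hs, ht, smul_add]

variable [Module Aᵐᵒᵖ X] [SMulCommClass A Aᵐᵒᵖ X]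

lemma tensorSmul_mul_one_tmul (δ : A →ₗ[R] X)
    (hδ : ∀ x y : A, δ (x * y) = x • δ y + op y • δ x) (a : A) (t : A ⊗[R] A) :
    tensorSmul δ (t * (1 ⊗ₜ a)) = LinearMap.mul' R A t • δ a + op a • tensorSmul δ t := by
  induction t using TensorProduct.induction_on with
  | zero => simp
  | tmul p q => simp [hδ, mul_smul, smul_comm p (op a)]
  | add s t hs ht =>
    simp only [add_mul, map_add, hs, ht, add_smul, smul_add]
    abel

theorem IsSeparabilityElement.exists_eq_smul_sub_op_smul {e : A ⊗[R] A}
    (he : IsSeparabilityElement R e) (δ : A →ₗ[R] X)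
    (hδ : ∀ x y : A, δ (x * y) = x • δ y + op y • δ x) :
    ∃ m : X, ∀ a : A, δ a = a • m - op a • m :=
  ⟨tensorSmul δ e, fun a => by
    rw [← tensorSmul_tmul_one_mul, he.tmul_one_mul_eq_mul_one_tmul,
      tensorSmul_mul_one_tmul δ hδ, he.mul'_eq_one, one_smul, add_sub_cancel_right]⟩

end Bimodule

theorem IsSeparabilityElement.map {R A B : Type*} [CommSemiring R] [Semiring A] [Algebra R A]
    [Semiring B] [Algebra R B] {e : A ⊗[R] A} (he : IsSeparabilityElement R e)
    (φ : A →ₐ[R] B) (hφ : Function.Surjective φ) :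
    IsSeparabilityElement R (Algebra.TensorProduct.map φ φ e) where
  mul'_eq_one := by
    have mul'_comp_map : (LinearMap.mul' R B).comp (Algebra.TensorProduct.map φ φ).toLinearMap =
        φ.toLinearMap.comp (LinearMap.mul' R A) := by
      ext; simp
    simpa only [LinearMap.comp_apply, AlgHom.toLinearMap_apply, he.mul'_eq_one, map_one]
      using LinearMap.congr_fun mul'_comp_map e
  tmul_one_mul_eq_mul_one_tmul b := by
    obtain ⟨a, rfl⟩ := hφ b
    simpa using congrArg (Algebra.TensorProduct.map φ φ) (he.tmul_one_mul_eq_mul_one_tmul a)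

section Pi

variable {R ι : Type*} [CommSemiring R] [DecidableEq ι] {A : ι → Type*}
  [∀ i, Semiring (A i)] [∀ i, Algebra R (A i)]

abbrev tensorSingle (i : ι) : A i ⊗[R] A i →ₗ[R] (Π i, A i) ⊗[R] (Π i, A i) :=
  TensorProduct.map (LinearMap.single R A i) (LinearMap.single R A i)

lemma mul'_tensorSingle (i : ι) (t : A i ⊗[R] A i) :
    LinearMap.mul' R (Π i, A i) (tensorSingle i t) = Pi.single i (LinearMap.mul' R (A i) t) := by
  induction t using TensorProduct.induction_on with
  | zero => simp
  | tmul p q => simp [Pi.single_mul]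
  | add s t hs ht => simp only [map_add, hs, ht, Pi.single_add]

lemma tmul_one_mul_tensorSingle (a : Π i, A i) (i : ι) (t : A i ⊗[R] A i) :
    (a ⊗ₜ[R] 1) * tensorSingle i t = tensorSingle i ((a i ⊗ₜ[R] 1) * t) := by
  induction t using TensorProduct.induction_on with
  | zero => simp
  | tmul p q => simp [Pi.single_mul_right]
  | add s t hs ht => simp only [map_add, mul_add, hs, ht]

lemma tensorSingle_mul_one_tmul (a : Π i, A i) (i : ι) (t : A i ⊗[R] A i) :
    tensorSingle i t * (1 ⊗ₜ[R] a) = tensorSingle i (t * (1 ⊗ₜ[R] a i)) := by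
  induction t using TensorProduct.induction_on with
  | zero => simp
  | tmul p q => simp [Pi.single_mul_left]
  | add s t hs ht => simp only [map_add, add_mul, hs, ht]

variable [Fintype ι]

theorem IsSeparabilityElement.pi {e : Π i, A i ⊗[R] A i}
    (he : ∀ i, IsSeparabilityElement R (e i)) :
    IsSeparabilityElement R (∑ i, tensorSingle i (e i)) where
  mul'_eq_one := by
    simp only [map_sum, mul'_tensorSingle, (he _).mul'_eq_one, Finset.univ_sum_single]
    rfl
  tmul_one_mul_eq_mul_one_tmul a := by
    simp only [Finset.mul_sum, Finset.sum_mul, tmul_one_mul_tensorSingle,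
      tensorSingle_mul_one_tmul, (he _).tmul_one_mul_eq_mul_one_tmul]

theorem IsSeparabilityElement.exists_pi (h : ∀ i, ∃ e : A i ⊗[R] A i, IsSeparabilityElement R e) :
    ∃ e : (Π i, A i) ⊗[R] (Π i, A i), IsSeparabilityElement R e := by
  choose e he using h
  exact ⟨_, .pi he⟩

end Pi

namespace Matrix

variable {R n : Type*} [CommSemiring R] [Fintype n] [DecidableEq n]

theorem isSeparabilityElement_sum_single_tmul_single (j₀ : n) :
    IsSeparabilityElement R (∑ j, single j j₀ (1 : R) ⊗ₜ[R] single j₀ j (1 : R)) where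
  mul'_eq_one := by simp [sum_single_one]
  tmul_one_mul_eq_mul_one_tmul a := by
    induction a using Matrix.induction_on' with
    | h_zero => simp
    | h_add p q hp hq => simp only [add_tmul, tmul_add, add_mul, mul_add, hp, hq]
    | h_std_basis p q x =>
      simp only [Finset.mul_sum, Finset.sum_mul, Algebra.TensorProduct.tmul_mul_tmul]
      rw [Fintype.sum_eq_single q fun j hj => by simp [hj.symm],
        Fintype.sum_eq_single p fun j hj => by simp [hj]]
      simp only [single_mul_single_same, mul_one, one_mul]
      have single_eq_smul (i j : n) : single i j x = x • single i j (1 : R) := by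
        rw [smul_single, smul_eq_mul, mul_one]
      rw [single_eq_smul, single_eq_smul, smul_tmul]

theorem exists_isSeparabilityElement :
    ∃ e : Matrix n n R ⊗[R] Matrix n n R, IsSeparabilityElement R e := by
  cases isEmpty_or_nonempty n with
  | inl _ => exact ⟨0, Subsingleton.elim _ _, fun _ => by simp⟩
  | inr h => exact ⟨_, isSeparabilityElement_sum_single_tmul_single h.some⟩

end Matrix

theorem sum_of_matrix_algebras_has_trivial_H1_general
    (A : Type) [NormedRing A] [NormedAlgebra ℂ A]
    (k : ℕ) (n : Fin k → ℕ)
    (hA : Nonempty (A ≃ₐ[ℂ] Π i, Matrix (Fin (n i)) (Fin (n i)) ℂ))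
    (X : Type) [NormedAddCommGroup X] [NormedSpace ℂ X]
    [Module A X] [Module Aᵐᵒᵖ X] [SMulCommClass A Aᵐᵒᵖ X]
    [IsScalarTower ℂ A X]
    (δ : A →L[ℂ] X)
    (hδ : ∀ x y : A, δ (x * y) = x • δ y + MulOpposite.op y • δ x) :
    ∃ m : X, ∀ a : A, δ a = a • m - MulOpposite.op a • m := by
  obtain ⟨φ⟩ := hA
  obtain ⟨e, he⟩ := IsSeparabilityElement.exists_pi fun i =>
    Matrix.exists_isSeparabilityElement (R := ℂ) (n := Fin (n i))
  exact (he.map φ.symm.toAlgHom φ.symm.surjective).exists_eq_smul_sub_op_smul δ.toLinearMap hδ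

/-- If a Banach algebra `A` over ℂ is isomorphic as a ℂ-algebra to a finite direct sum
of full matrix algebras, then every bounded derivation of `A` into every bounded Banach
`A`-bimodule `X` is inner, i.e. `H¹(A, X) = 0`.  The bimodule structure on `X` is
encoded by commuting actions of `A` and `Aᵐᵒᵖ` compatible with the ℂ-structure, with a
joint bound `‖a·x·b‖ ≤ c‖a‖‖x‖‖b‖`. -/
theorem sum_of_matrix_algebras_has_trivial_H1
    (A : Type) [NormedRing A] [NormedAlgebra ℂ A] [CompleteSpace A]
    (k : ℕ) (n : Fin k → ℕ)
    (hA : Nonempty (A ≃ₐ[ℂ] Π i, Matrix (Fin (n i)) (Fin (n i)) ℂ))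
    (X : Type) [NormedAddCommGroup X] [NormedSpace ℂ X] [CompleteSpace X]
    [Module A X] [Module Aᵐᵒᵖ X] [SMulCommClass A Aᵐᵒᵖ X]
    [IsScalarTower ℂ A X] [IsScalarTower ℂ Aᵐᵒᵖ X]
    (c : ℝ)
    (hbound : ∀ (a b : A) (x : X), ‖a • MulOpposite.op b • x‖ ≤ c * ‖a‖ * ‖x‖ * ‖b‖)
    (δ : A →L[ℂ] X)
    (hδ : ∀ x y : A, δ (x * y) = x • δ y + MulOpposite.op y • δ x) :
    ∃ m : X, ∀ a : A, δ a = a • m - MulOpposite.op a • m :=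
  sum_of_matrix_algebras_has_trivial_H1_general A k n hA X δ hδ
end
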